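/- Let T be a square complex matrix with trace norm ‖T‖₁ < 1. Then |det(1 + T) − 1| ≤ ‖T‖₁/(1 − ‖T‖₁). -/

import Mathlib

open MeasureTheory
open scoped ComplexOrder

noncomputable section

namespace Chiral

/-- The ℓ²-operator norm of a square complex matrix. -/
def opNorm {n : Type*} [Fintype n] [DecidableEq n] (T : Matrix n n ℂ) : ℝ :=
  ‖Matrix.toEuclideanCLM (𝕜 := ℂ) T‖

/-- The trace norm `Tr √(T*T)` of a square complex matrix. -/
def traceNorm {n : Type*} [Fintype n] [DecidableEq n] (T : Matrix n n ℂ) : ℝ :=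
  (((Matrix.posSemidef_conjTranspose_mul_self T).1.eigenvectorUnitary : Matrix n n ℂ) *
    Matrix.diagonal (((↑) : ℝ → ℂ) ∘ Real.sqrt ∘ (Matrix.posSemidef_conjTranspose_mul_self T).1.eigenvalues) *
    (star (Matrix.posSemidef_conjTranspose_mul_self T).1.eigenvectorUnitary : Matrix n n ℂ)).trace.re

open Classical in
/-- Functional calculus of a Hermitian matrix: same eigenvectors, eigenvalue `E`
replaced by `f E`.  (Junk value `0` if the matrix is not Hermitian.) -/
def matFun {n : Type*} [Fintype n] [DecidableEq n] (f : ℝ → ℂ) (H : Matrix n n ℂ) :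
    Matrix n n ℂ :=
  if hH : H.IsHermitian then
    (hH.eigenvectorUnitary : Matrix n n ℂ) *
      Matrix.diagonal (fun i => f (hH.eigenvalues i)) *
      star (hH.eigenvectorUnitary : Matrix n n ℂ)
  else 0

/-- The matrix exponential. -/
def matExp {n : Type*} [Fintype n] [DecidableEq n] (M : Matrix n n ℂ) : Matrix n n ℂ :=
  NormedSpace.exp M

/-- `S = tanh (H/δ)` by functional calculus. -/
def tanhOf {n : Type*} [Fintype n] [DecidableEq n] (δ : ℝ) (H : Matrix n n ℂ) :
    Matrix n n ℂ :=
  matFun (fun E => (Real.tanh (E / δ) : ℂ)) H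

/-- Index set of the finite chain of length `L` with two internal degrees of freedom. -/
abbrev Site (L : ℕ) := Fin L × Fin 2

/-- The `2×2` block of a matrix on the chain corresponding to sites `x, y`. -/
def matBlock {L : ℕ} (T : Matrix (Site L) (Site L) ℂ) (x y : Fin L) :
    Matrix (Fin 2) (Fin 2) ℂ :=
  Matrix.of fun s s' => T (x, s) (y, s')

/-- A finite Hamiltonian is short range with parameters `d`, `K`. -/
def FinShortRange {L : ℕ} (H : Matrix (Site L) (Site L) ℂ) (d K : ℝ) : Prop :=
  ∀ x : Fin L, ∑ y : Fin L,
    opNorm (matBlock H x y) * Real.exp (|((x : ℕ) : ℝ) - ((y : ℕ) : ℝ)| / d) ≤ K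

/-- The chiral operator `C` on the finite chain: `+1` on the `A` component,
`-1` on the `B` component. -/
def chiralC (L : ℕ) : Matrix (Site L) (Site L) ℂ :=
  Matrix.diagonal fun p => if p.2 = 0 then 1 else -1

/-- The diagonal matrix `θ(X)` associated to a switch function `θ`. -/
def switchX {L : ℕ} (θ : Fin L → ℝ) : Matrix (Site L) (Site L) ℂ :=
  Matrix.diagonal fun p => (θ p.1 : ℂ)

/-- The standard switch function: `1` on the left half (`x < L/2`), `0` on the right half. -/
def midSwitch (L : ℕ) : Fin L → ℝ := fun x => if ((x : ℕ) : ℝ) < (L : ℝ) / 2 then 1 else 0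

/-- The edge index `Tr (C θ(X) (1 - S²))`. -/
def edgeIndex {L : ℕ} (θ : Fin L → ℝ) (S : Matrix (Site L) (Site L) ℂ) : ℂ :=
  Matrix.trace (chiralC L * switchX θ * (1 - S * S))

/-- The bulk index `½ Tr (C S [θ(X), S])`. -/
def bulkIndex {L : ℕ} (θ : Fin L → ℝ) (S : Matrix (Site L) (Site L) ℂ) : ℂ :=
  (1 / 2 : ℂ) * Matrix.trace (chiralC L * S * (switchX θ * S - S * switchX θ))

/-- The bulk Hilbert space `ℓ²(ℤ; ℂ²)`. -/
abbrev BulkSpace := lp (fun _ : ℤ => EuclideanSpace ℂ (Fin 2)) 2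

/-- Bounded operators on the bulk Hilbert space. -/
abbrev BulkOp := BulkSpace →L[ℂ] BulkSpace

/-- The canonical basis vector at site `x` with internal index `s`. -/
def bvec (x : ℤ) (s : Fin 2) : BulkSpace := lp.single 2 x (EuclideanSpace.single s 1)

/-- The `2×2` block `T_{x,y}` of a bulk operator. -/
def bulkBlock (T : BulkOp) (x y : ℤ) : Matrix (Fin 2) (Fin 2) ℂ :=
  Matrix.of fun s s' => (inner ℂ (bvec x s) (T (bvec y s')) : ℂ)

/-- A bulk Hamiltonian is short range with parameters `d`, `K`:
`sup_x ∑_y ‖T_{x,y}‖ e^{|x-y|/d} ≤ K`. -/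
def BulkShortRange (T : BulkOp) (d K : ℝ) : Prop :=
  ∀ x : ℤ,
    Summable (fun y : ℤ => opNorm (bulkBlock T x y) * Real.exp (|((x : ℝ)) - ((y : ℝ))| / d)) ∧
    ∑' y : ℤ, opNorm (bulkBlock T x y) * Real.exp (|((x : ℝ)) - ((y : ℝ))| / d) ≤ K

/-- The spectrum of `T` does not meet the open interval `(-Δ, Δ)`. -/
def HasGap (T : BulkOp) (Δ : ℝ) : Prop :=
  ∀ r : ℝ, |r| < Δ → (r : ℂ) ∉ spectrum ℂ T

/-- The on-site chiral matrix `diag(1, -1)`. -/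
def c2 : Matrix (Fin 2) (Fin 2) ℂ := Matrix.diagonal fun s => if s = 0 then 1 else -1

/-- A bulk operator is chiral: it anticommutes with the bulk chiral operator
(expressed blockwise, which is equivalent). -/
def ChiralBulk (T : BulkOp) : Prop :=
  ∀ x y : ℤ, c2 * bulkBlock T x y + bulkBlock T x y * c2 = 0

/-- The restriction `ι* T ι` of a bulk operator to the finite open chain of length `L`. -/
def restrict (L : ℕ) (T : BulkOp) : Matrix (Site L) (Site L) ℂ :=
  Matrix.of fun p q => bulkBlock T ((p.1 : ℕ) : ℤ) ((q.1 : ℕ) : ℤ) p.2 q.2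

end Chiral

/-! Put `g s = det (1 + s • T)` for `0 ≤ s ≤ 1`. Jacobi's formula gives
`g' = g · Tr ((1 + s • T)⁻¹ T)`, and trace duality `|Tr (B T)| ≤ ‖B‖ ‖T‖₁`, together with
`‖T‖ ≤ ‖T‖₁` and the Neumann series, bounds this logarithmic derivative by `x / (1 - s x)`,
where `x = ‖T‖₁`. The function `s x / (1 - s x)` solves the extremal equation
`B' = (1 + B) · x / (1 - s x)` with `B 0 = 0`, so comparison gives `|g 1 - 1| ≤ x / (1 - x)`. -/

open Set Filter Topology
open scoped InnerProductSpace Matrix.Norms.L2Operator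

open Polynomial in
theorem Matrix.hasDerivAt_det_one_add_smul {𝕜 n : Type*} [NontriviallyNormedField 𝕜] [Fintype n]
    [DecidableEq n] (N : Matrix n n 𝕜) :
    HasDerivAt (fun z : 𝕜 => (1 + z • N).det) N.trace 0 := by
  set Q := (Matrix.det (1 + (X : 𝕜[X]) • N.map C)).divX.divX
  have hQ : HasDerivAt (fun z => Q.eval z * z ^ 2) 0 0 := by
    simpa using (Q.hasDerivAt 0).fun_mul (hasDerivAt_pow 2 (0 : 𝕜))
  rw [funext fun z : 𝕜 => Matrix.det_one_add_smul z N]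
  simpa using (((hasDerivAt_id (0 : 𝕜)).const_mul N.trace).const_add 1).fun_add hQ

theorem Matrix.hasDerivAt_det_add_smul {𝕜 n : Type*} [NontriviallyNormedField 𝕜] [Fintype n]
    [DecidableEq n] {A N : Matrix n n 𝕜} {c : 𝕜} (hA : IsUnit (A + c • N).det) :
    HasDerivAt (fun z : 𝕜 => (A + z • N).det) ((A + c • N).det * ((A + c • N)⁻¹ * N).trace) c := by
  set M := A + c • N
  have hfactor (z : 𝕜) : A + z • N = M * (1 + (z - c) • (M⁻¹ * N)) := by
    rw [mul_add, mul_one, Matrix.mul_smul, ← Matrix.mul_assoc, Matrix.mul_nonsing_inv M hA,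
      Matrix.one_mul, add_assoc, ← add_smul, add_sub_cancel]
  simp_rw [hfactor, Matrix.det_mul]
  refine .const_mul _ (.comp_sub_const (f := fun z => (1 + z • (M⁻¹ * N)).det) c c ?_)
  simpa using Matrix.hasDerivAt_det_one_add_smul (M⁻¹ * N)

theorem Matrix.trace_eq_sum_inner {𝕜 ι n : Type*} [RCLike 𝕜] [Fintype ι] [Fintype n]
    [DecidableEq n] (M : Matrix n n 𝕜) (b : OrthonormalBasis ι 𝕜 (EuclideanSpace 𝕜 n)) :
    M.trace = ∑ i, ⟪b i, Matrix.toEuclideanCLM (𝕜 := 𝕜) M (b i)⟫_𝕜 := by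
  refine Eq.trans ?_ (LinearMap.trace_eq_sum_inner (Matrix.toEuclideanLin M) b)
  rw [LinearMap.trace_eq_matrix_trace 𝕜 (EuclideanSpace.basisFun n 𝕜).toBasis]
  congr 1
  ext i j
  simp [LinearMap.toMatrix_apply]

section NeumannSeries

variable {𝕜 n : Type*} [RCLike 𝕜] [Fintype n] [DecidableEq n]

theorem Matrix.l2_opNorm_one_le : ‖(1 : Matrix n n 𝕜)‖ ≤ 1 := by
  rw [Matrix.cstar_norm_def, map_one]
  exact ContinuousLinearMap.norm_id_le

theorem Matrix.isUnit_det_one_add {A : Matrix n n 𝕜} (hA : ‖A‖ < 1) : IsUnit (1 + A).det := by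
  rw [← Matrix.isUnit_iff_isUnit_det, ← sub_neg_eq_add]
  exact isUnit_one_sub_of_norm_lt_one (by rwa [norm_neg])

theorem Matrix.l2_opNorm_inv_one_add_le {A : Matrix n n 𝕜} (hA : ‖A‖ < 1) :
    ‖(1 + A)⁻¹‖ ≤ (1 - ‖A‖)⁻¹ := by
  have hA' : ‖-A‖ < 1 := by rwa [norm_neg]
  have hgeom := tsum_geometric_le_of_norm_lt_one (-A) hA'
  rw [norm_neg] at hgeom
  rw [Matrix.nonsing_inv_eq_ringInverse, ← sub_neg_eq_add, ← geom_series_eq_inverse _ hA']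
  linarith [Matrix.l2_opNorm_one_le (𝕜 := 𝕜) (n := n)]

end NeumannSeries

theorem norm_sub_one_le_of_hasDerivAt_eq_mul_of_lt {g τ : ℝ → ℂ} {x y : ℝ} (hxy : x < y)
    (hy : y < 1) (hg0 : g 0 = 1) (hg : ∀ s ∈ Icc (0 : ℝ) 1, HasDerivAt g (g s * τ s) s)
    (hτ : ∀ s ∈ Icc (0 : ℝ) 1, ‖τ s‖ ≤ x / (1 - s * x)) :
    ‖g 1 - 1‖ ≤ (1 - y)⁻¹ - 1 := by
  have hx0 : 0 ≤ x := by simpa using (norm_nonneg _).trans (hτ 0 ⟨le_rfl, zero_le_one⟩)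
  have hpos : ∀ s ∈ Icc (0 : ℝ) 1, 0 < 1 - s * y := fun s hs => by
    nlinarith [mul_le_of_le_one_left (hx0.trans hxy.le) hs.2]
  have hB : ∀ s ∈ Icc (0 : ℝ) 1,
      HasDerivAt (fun s => (1 - s * y)⁻¹ - 1) (y / (1 - s * y) ^ 2) s := fun s hs => by
    have hlin : HasDerivAt (fun s : ℝ => 1 - s * y) (-y) s := by
      simpa using ((hasDerivAt_id s).mul_const y).const_sub 1
    exact ((hlin.fun_inv (hpos s hs).ne').sub_const 1).congr_deriv (by ring)
  have hcomp := image_norm_le_of_norm_deriv_right_lt_deriv_boundary'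
    (f := fun s => g s - 1) (B := fun s => (1 - s * y)⁻¹ - 1)
    (fun s hs => ((hg s hs).sub_const 1).continuousAt.continuousWithinAt)
    (fun s hs => ((hg s (Ico_subset_Icc_self hs)).sub_const 1).hasDerivWithinAt)
    (by simp [hg0])
    (fun s hs => (hB s hs).continuousAt.continuousWithinAt)
    (fun s hs => (hB s (Ico_subset_Icc_self hs)).hasDerivWithinAt)
    (fun s hs hgs => ?_) (right_mem_Icc.2 zero_le_one)
  · simpa using hcomp
  have hs := Ico_subset_Icc_self hs
  have hsy := hpos s hs
  have hsx : 0 < 1 - s * x := by nlinarith [hs.1]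
  have hgs' : ‖g s‖ ≤ (1 - s * y)⁻¹ := by
    simpa [hgs] using norm_le_norm_sub_add (g s) 1
  calc ‖g s * τ s‖ = ‖g s‖ * ‖τ s‖ := norm_mul _ _
    _ ≤ (1 - s * y)⁻¹ * (x / (1 - s * x)) :=
      mul_le_mul hgs' (hτ s hs) (norm_nonneg _) (by positivity)
    _ < (1 - s * y)⁻¹ * (y / (1 - s * y)) := by
      refine mul_lt_mul_of_pos_left ?_ (inv_pos.2 hsy)
      rw [div_lt_div_iff₀ hsx hsy]
      nlinarith
    _ = y / (1 - s * y) ^ 2 := by field_simp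

theorem norm_sub_one_le_of_hasDerivAt_eq_mul {g τ : ℝ → ℂ} {x : ℝ} (hx : x < 1) (hg0 : g 0 = 1)
    (hg : ∀ s ∈ Icc (0 : ℝ) 1, HasDerivAt g (g s * τ s) s)
    (hτ : ∀ s ∈ Icc (0 : ℝ) 1, ‖τ s‖ ≤ x / (1 - s * x)) :
    ‖g 1 - 1‖ ≤ x / (1 - x) := by
  have hx1 : 1 - x ≠ 0 := by linarith
  -- The comparison principle needs a strict inequality, hence the detour through `y > x`.
  have hlim : Tendsto (fun y : ℝ => (1 - y)⁻¹ - 1) (𝓝[>] x) (𝓝 ((1 - x)⁻¹ - 1)) := by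
    refine ContinuousAt.tendsto ?_ |>.mono_left nhdsWithin_le_nhds
    fun_prop (disch := exact hx1)
  rw [show x / (1 - x) = (1 - x)⁻¹ - 1 by field_simp; ring]
  refine ge_of_tendsto hlim ?_
  filter_upwards [Ioo_mem_nhdsGT hx] with y ⟨hxy, hy⟩
  exact norm_sub_one_le_of_hasDerivAt_eq_mul_of_lt hxy hy hg0 hg hτ

namespace Chiral

section TraceNorm

variable {n : Type*} [Fintype n] [DecidableEq n]

abbrev rightSingularBasis (T : Matrix n n ℂ) : OrthonormalBasis n ℂ (EuclideanSpace ℂ n) :=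
  (Matrix.posSemidef_conjTranspose_mul_self T).1.eigenvectorBasis

theorem traceNorm_eq_sum_norm_apply (T : Matrix n n ℂ) :
    traceNorm T = ∑ i, ‖Matrix.toEuclideanCLM (𝕜 := ℂ) T (rightSingularBasis T i)‖ := by
  have hsingular (i : n) : ‖Matrix.toEuclideanCLM (𝕜 := ℂ) T (rightSingularBasis T i)‖
      = √((Matrix.posSemidef_conjTranspose_mul_self T).1.eigenvalues i) := by
    rw [Matrix.IsHermitian.eigenvalues_eq, ← Matrix.mulVec_mulVec, Matrix.dotProduct_mulVec,
      ← Matrix.star_mulVec, dotProduct_comm, ← Matrix.ofLp_toEuclideanCLM,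
      ← EuclideanSpace.inner_eq_star_dotProduct, inner_self_eq_norm_sq, Real.sqrt_sq (norm_nonneg _)]
  simp only [hsingular, traceNorm, Matrix.trace_mul_cycle _ (Matrix.diagonal _)]
  simp [Matrix.trace_diagonal]

theorem traceNorm_nonneg (T : Matrix n n ℂ) : 0 ≤ traceNorm T := by
  rw [traceNorm_eq_sum_norm_apply]
  positivity

theorem norm_le_traceNorm (T : Matrix n n ℂ) : ‖T‖ ≤ traceNorm T := by
  refine ContinuousLinearMap.opNorm_le_bound _ (traceNorm_nonneg T) fun u => ?_
  set b := rightSingularBasis T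
  conv_lhs => rw [← b.sum_repr' u, map_sum]
  rw [traceNorm_eq_sum_norm_apply, Finset.sum_mul]
  refine norm_sum_le_of_le _ fun i _ => ?_
  rw [map_smul, norm_smul, mul_comm]
  exact mul_le_mul_of_nonneg_left (by simpa using norm_inner_le_norm (𝕜 := ℂ) (b i) u)
    (norm_nonneg _)

theorem norm_trace_mul_le (B T : Matrix n n ℂ) : ‖(B * T).trace‖ ≤ ‖B‖ * traceNorm T := by
  set b := rightSingularBasis T
  rw [Matrix.trace_eq_sum_inner _ b, traceNorm_eq_sum_norm_apply, Finset.mul_sum]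
  refine norm_sum_le_of_le _ fun i _ => ?_
  calc ‖⟪b i, Matrix.toEuclideanCLM (𝕜 := ℂ) (B * T) (b i)⟫_ℂ‖
      ≤ ‖Matrix.toEuclideanCLM (𝕜 := ℂ) B (Matrix.toEuclideanCLM (𝕜 := ℂ) T (b i))‖ := by
        simpa using norm_inner_le_norm (𝕜 := ℂ) (b i) _
    _ ≤ ‖B‖ * ‖Matrix.toEuclideanCLM (𝕜 := ℂ) T (b i)‖ := ContinuousLinearMap.le_opNorm _ _

theorem norm_ofReal_smul_le_mul_traceNorm (T : Matrix n n ℂ) {s : ℝ} (hs : 0 ≤ s) :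
    ‖(s : ℂ) • T‖ ≤ s * traceNorm T := by
  rw [norm_smul, Complex.norm_real, Real.norm_of_nonneg hs]
  exact mul_le_mul_of_nonneg_left (norm_le_traceNorm T) hs

theorem norm_trace_inv_one_add_smul_mul_le (T : Matrix n n ℂ) {s : ℝ} (hs : 0 ≤ s)
    (hsT : s * traceNorm T < 1) :
    ‖((1 + (s : ℂ) • T)⁻¹ * T).trace‖ ≤ traceNorm T / (1 - s * traceNorm T) := by
  have hsmul := norm_ofReal_smul_le_mul_traceNorm T hs
  calc ‖((1 + (s : ℂ) • T)⁻¹ * T).trace‖ ≤ ‖(1 + (s : ℂ) • T)⁻¹‖ * traceNorm T :=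
        norm_trace_mul_le _ T
    _ ≤ (1 - s * traceNorm T)⁻¹ * traceNorm T := by
        refine mul_le_mul_of_nonneg_right ?_ (traceNorm_nonneg T)
        refine (Matrix.l2_opNorm_inv_one_add_le (hsmul.trans_lt hsT)).trans ?_
        exact inv_anti₀ (by linarith) (by linarith)
    _ = traceNorm T / (1 - s * traceNorm T) := inv_mul_eq_div _ _

end TraceNorm

theorem stmt10 {n : Type*} [Fintype n] [DecidableEq n]
    (T : Matrix n n ℂ) (hT : traceNorm T < 1) :
    ‖(1 + T).det - 1‖ ≤ traceNorm T / (1 - traceNorm T) := by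
  have hsT (s : ℝ) (hs : s ∈ Icc (0 : ℝ) 1) : s * traceNorm T < 1 :=
    (mul_le_of_le_one_left (traceNorm_nonneg T) hs.2).trans_lt hT
  have hdet (s : ℝ) (hs : s ∈ Icc (0 : ℝ) 1) : IsUnit (1 + (s : ℂ) • T).det :=
    Matrix.isUnit_det_one_add ((norm_ofReal_smul_le_mul_traceNorm T hs.1).trans_lt (hsT s hs))
  simpa using norm_sub_one_le_of_hasDerivAt_eq_mul (g := fun s : ℝ => (1 + (s : ℂ) • T).det)
    (τ := fun s => ((1 + (s : ℂ) • T)⁻¹ * T).trace) hT (by simp)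
    (fun s hs => (Matrix.hasDerivAt_det_add_smul (hdet s hs)).comp_ofReal)
    (fun s hs => norm_trace_inv_one_add_smul_mul_le T hs.1 (hsT s hs))

end Chiral

end
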